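/- arXiv:2507.17834 — 5 statements merged into one kernel-verified Lean document; each statement's English description precedes it below -/
import Mathlib

section
/- Let (X,d) be a metric space, k ≥ 1, n ≥ 1, let r_1,…,r_n ∈ X be requests, let c_0 : Fin k → X be any initial configuration, and let δ > 0. Suppose S ⊆ {1,…,n} is a set of indices such that the points {r_i : i ∈ S} are pairwise at distance greater than δ (in particular i ↦ r_i is injective on S). Then every k-server schedule serving r_1,…,r_n from c_0 has cost at least (|S| − k)·δ. -/
lemma path_dist_le {X : Type*} [MetricSpace X] (p : ℕ → X) (a b : ℕ) (hab : a ≤ b) :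
    dist (p a) (p b) ≤ ∑ t ∈ Finset.Icc (a + 1) b, dist (p (t - 1)) (p t) := by
  have h := dist_le_range_sum_dist (fun i => p (a + i)) (b - a)
  have : dist (p a) (p b) ≤ ∑ i ∈ Finset.range (b - a), dist (p (a + i)) (p (a + (i + 1))) := by
    have e1 : a + 0 = a := by omega
    have e2 : a + (b - a) = b := by omega
    rwa [e1, e2] at h
  refine this.trans_eq ?_
  rw [← Finset.Ico_add_one_right_eq_Icc, Finset.sum_Ico_eq_sum_range]
  have hcard : b + 1 - (a + 1) = b - a := by omega
  rw [hcard]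
  apply Finset.sum_congr rfl
  intro i _
  congr 2 <;> omega

lemma path_lb {X : Type*} [MetricSpace X] {δ : ℝ} (hδ : 0 < δ) (p : ℕ → X)
    (T : Finset ℕ) (hsep : ∀ a ∈ T, ∀ b ∈ T, a ≠ b → δ < dist (p a) (p b))
    (n : ℕ) (hbd : ∀ t ∈ T, t ≤ n) :
    ((T.card : ℝ) - 1) * δ ≤ ∑ t ∈ Finset.Icc 1 n, dist (p (t - 1)) (p t) := by
  induction T using Finset.strongInduction generalizing n with
  | _ T ih =>
    rcases le_or_gt T.card 1 with hle | hgt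
    · have h1 : ((T.card : ℝ) - 1) * δ ≤ 0 := by
        apply mul_nonpos_of_nonpos_of_nonneg _ hδ.le
        have : (T.card : ℝ) ≤ 1 := by exact_mod_cast hle
        linarith
      exact h1.trans (Finset.sum_nonneg fun _ _ => dist_nonneg)
    · have hne : T.Nonempty := Finset.card_pos.mp (by omega)
      set m := T.max' hne with hm
      have hmT : m ∈ T := T.max'_mem hne
      set T' := T.erase m with hT'
      have hT'card : T'.card = T.card - 1 := Finset.card_erase_of_mem hmT
      have hT'ne : T'.Nonempty := Finset.card_pos.mp (by omega)
      set m' := T'.max' hT'ne with hm'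
      have hm'T' : m' ∈ T' := T'.max'_mem hT'ne
      have hm'T : m' ∈ T := Finset.mem_of_mem_erase hm'T'
      have hm'ne : m' ≠ m := Finset.ne_of_mem_erase hm'T'
      have hm'lt : m' < m := lt_of_le_of_ne (T.le_max' m' hm'T) hm'ne
      have hmn : m ≤ n := hbd m hmT
      -- IH on T' up to time m'
      have ih1 : ((T'.card : ℝ) - 1) * δ ≤ ∑ t ∈ Finset.Icc 1 m', dist (p (t - 1)) (p t) := by
        apply ih T' (Finset.erase_ssubset hmT)
        · intro a ha b hb hab
          exact hsep a (Finset.mem_of_mem_erase ha) b (Finset.mem_of_mem_erase hb) hab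
        · intro t ht
          exact T'.le_max' t ht
      -- distance segment
      have hseg : δ ≤ ∑ t ∈ Finset.Icc (m' + 1) m, dist (p (t - 1)) (p t) :=
        le_trans (hsep m' hm'T m hmT hm'ne).le (path_dist_le p m' m hm'lt.le)
      -- combine via disjoint subsets of Icc 1 n
      have hsub : Finset.Icc 1 m' ∪ Finset.Icc (m' + 1) m ⊆ Finset.Icc 1 n := by
        intro x hx
        simp only [Finset.mem_union, Finset.mem_Icc] at hx ⊢
        omega
      have hdisj : Disjoint (Finset.Icc 1 m') (Finset.Icc (m' + 1) m) := by
        rw [Finset.disjoint_left]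
        intro x hx hx'
        simp only [Finset.mem_Icc] at hx hx'
        omega
      have hsum : (∑ t ∈ Finset.Icc 1 m', dist (p (t - 1)) (p t)) +
          ∑ t ∈ Finset.Icc (m' + 1) m, dist (p (t - 1)) (p t) ≤
          ∑ t ∈ Finset.Icc 1 n, dist (p (t - 1)) (p t) := by
        rw [← Finset.sum_union hdisj]
        exact Finset.sum_le_sum_of_subset_of_nonneg hsub fun _ _ _ => dist_nonneg
      have hcards : (T.card : ℝ) - 1 = ((T'.card : ℝ) - 1) + 1 := by
        rw [hT'card]
        have : (1:ℕ) ≤ T.card := by omega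
        push_cast [hT'card, Nat.cast_sub this]
        ring
      calc ((T.card : ℝ) - 1) * δ = ((T'.card : ℝ) - 1) * δ + δ := by rw [hcards]; ring
        _ ≤ (∑ t ∈ Finset.Icc 1 m', dist (p (t - 1)) (p t)) +
            ∑ t ∈ Finset.Icc (m' + 1) m, dist (p (t - 1)) (p t) := add_le_add ih1 hseg
        _ ≤ _ := hsum

/-- deterministic core of Lemma 3.1.
Let `(X,d)` be a metric space, `k ≥ 1`, `n ≥ 1`, `r 1, …, r n ∈ X` be requests,
`c 0 : Fin k → X` an arbitrary initial configuration, and `δ > 0`.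
Suppose `S ⊆ {1,…,n}` is a set of indices such that the points `{r i : i ∈ S}` are pairwise
at distance greater than `δ`. Then every `k`-server schedule `c` serving `r 1, …, r n`
from `c 0` has cost at least `(|S| - k) · δ`. -/
theorem kserver_cost_lower_bound_of_separated
    {X : Type*} [MetricSpace X] {k n : ℕ} (hk : 1 ≤ k) (hn : 1 ≤ n)
    (r : ℕ → X) {δ : ℝ} (hδ : 0 < δ)
    (S : Finset ℕ) (hS : S ⊆ Finset.Icc 1 n)
    (hsep : ∀ i ∈ S, ∀ j ∈ S, i ≠ j → δ < dist (r i) (r j))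
    (c : ℕ → Fin k → X)
    (hserve : ∀ t ∈ Finset.Icc 1 n, ∃ i, c t i = r t) :
    ((S.card : ℝ) - k) * δ ≤
      ∑ t ∈ Finset.Icc 1 n, ∑ i, dist (c (t - 1) i) (c t i) := by
  classical
  choose f hf using hserve
  set g : ℕ → Fin k := fun t =>
    if h : t ∈ Finset.Icc 1 n then f t h else ⟨0, hk⟩ with hg
  have hgserve : ∀ t ∈ S, c t (g t) = r t := by
    intro t ht
    have htI : t ∈ Finset.Icc 1 n := hS ht
    simp only [hg, dif_pos htI]
    exact hf t htI
  rw [Finset.sum_comm]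
  have hfib : ∀ i : Fin k,
      (((S.filter fun t => g t = i).card : ℝ) - 1) * δ ≤
        ∑ t ∈ Finset.Icc 1 n, dist (c (t - 1) i) (c t i) := by
    intro i
    apply path_lb hδ (fun t => c t i)
    · intro a ha b hb hab
      simp only [Finset.mem_filter] at ha hb
      have := hsep a ha.1 b hb.1 hab
      rwa [← hgserve a ha.1, ← hgserve b hb.1, ha.2, hb.2] at this
    · intro t ht
      simp only [Finset.mem_filter] at ht
      exact (Finset.mem_Icc.mp (hS ht.1)).2
  have hcard : S.card = ∑ i : Fin k, (S.filter fun t => g t = i).card :=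
    Finset.card_eq_sum_card_fiberwise fun t _ => Finset.mem_univ (g t)
  calc ((S.card : ℝ) - k) * δ
      = ∑ i : Fin k, (((S.filter fun t => g t = i).card : ℝ) - 1) * δ := by
        rw [← Finset.sum_mul]
        congr 1
        rw [Finset.sum_sub_distrib, Finset.sum_const, Finset.card_univ, Fintype.card_fin]
        push_cast [hcard]
        ring
    _ ≤ _ := Finset.sum_le_sum fun i _ => hfib i
end

section
/- Let (X,d) be a metric space, k ≥ 1, n ≥ 1, let (a_1,b_1),…,(a_n,b_n) ∈ X × X be taxi requests, let c_0 : Fin k → X be any initial configuration, and let δ > 0. Suppose S ⊆ {1,…,n} is a set of indices such that for every i ∈ S and every j < i one has d(b_j, a_i) > δ. Then every k-taxi schedule serving the requests from c_0 has empty-run cost at least (|S| − k)·δ. -/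
/-!
Split the cost taxi by taxi: at step `t` taxi `p` pays `d(c_{t-1}(p), a_t)` if it serves request
`t` and `d(c_{t-1}(p), c_t(p))` otherwise. Between two consecutive requests `j < i` served by the
same taxi, that taxi travels from `b_j` to `a_i` at its own expense, so it pays more than `δ` for
every request of `S` it serves except possibly the first one. Summing over the `k` taxis gives
`(|S| - k) δ`.
-/

open Finset

section EmptyRunCost

variable {X : Type*} [PseudoMetricSpace X]

/-- `P t` says that the taxi with trajectory `x` serves request `t`. -/
def emptyRunCost (a x : ℕ → X) (P : ℕ → Prop) [DecidablePred P] (t : ℕ) : ℝ :=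
  if P t then dist (x (t - 1)) (a t) else dist (x (t - 1)) (x t)

theorem dist_add_sum_erase_eq_sum_emptyRunCost {ι : Type*} [Fintype ι] [DecidableEq ι]
    (a : ℕ → X) (c : ℕ → ι → X) (s : ℕ → ι) (t : ℕ) :
    dist (c (t - 1) (s t)) (a t) + ∑ i ∈ univ.erase (s t), dist (c (t - 1) i) (c t i) =
      ∑ p, emptyRunCost a (fun u => c u p) (fun u => s u = p) t := by
  rw [← add_sum_erase univ _ (mem_univ (s t))]
  refine congrArg₂ (· + ·) (if_pos rfl).symm (sum_congr rfl fun p hp => ?_)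
  exact (if_neg (ne_of_mem_erase hp).symm).symm

variable {a b x : ℕ → X} {P : ℕ → Prop} [DecidablePred P] {δ : ℝ} {S : Finset ℕ}

/-- `D` is the credit towards the next pick-up of `S`: the distance travelled since the last
drop-off `b_j` (which is at least `d(b_j, x_m)`), or `δ` before the first one. -/
theorem exists_credit_le_sum_emptyRunCost (hδ : 0 ≤ δ)
    (hsep : ∀ i ∈ S, ∀ j, 1 ≤ j → j < i → δ < dist (b j) (a i)) :
    ∀ m, (∀ t ∈ Icc 1 m, P t → x t = b t) →
      ∃ D, 0 ≤ D ∧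
        ∑ t ∈ Icc 1 m, (if t ∈ S ∧ P t then δ else 0) - δ + D ≤
          ∑ t ∈ Icc 1 m, emptyRunCost a x P t ∧
        ∀ i ∈ S, m < i → δ ≤ D + dist (x m) (a i)
  | 0, _ => ⟨δ, hδ, by simp, fun _ _ _ => le_add_of_nonneg_right dist_nonneg⟩
  | m + 1, hserve => by
    obtain ⟨D, hD, hcost, hcredit⟩ :=
      exists_credit_le_sum_emptyRunCost hδ hsep m fun t ht => hserve t (by
        simp only [mem_Icc] at ht ⊢; omega)
    rw [sum_Icc_succ_top (by omega), sum_Icc_succ_top (by omega), emptyRunCost,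
      Nat.add_sub_cancel]
    by_cases hP : P (m + 1)
    · have hx : x (m + 1) = b (m + 1) := hserve _ (by simp) hP
      refine ⟨0, le_rfl, ?_, fun i hi hmi => ?_⟩
      · by_cases hS : m + 1 ∈ S
        · have := hcredit _ hS (by omega)
          simp only [hS, hP, and_self, if_true]
          linarith
        · simp only [hS, false_and, if_false, if_pos hP]
          linarith [dist_nonneg (x := x m) (y := a (m + 1))]
      · rw [hx, zero_add]
        exact (hsep i hi (m + 1) (by omega) hmi).le
    · refine ⟨D + dist (x m) (x (m + 1)), by positivity, ?_, fun i hi hmi => ?_⟩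
      · simp only [hP, and_false, if_false, add_zero]
        linarith
      · linarith [hcredit i hi (by omega), dist_triangle (x m) (x (m + 1)) (a i)]

theorem card_filter_sub_one_mul_le_sum_emptyRunCost {n : ℕ} (hδ : 0 ≤ δ)
    (hS : S ⊆ Icc 1 n) (hsep : ∀ i ∈ S, ∀ j, 1 ≤ j → j < i → δ < dist (b j) (a i))
    (hserve : ∀ t ∈ Icc 1 n, P t → x t = b t) :
    ((#{i ∈ S | P i} : ℝ) - 1) * δ ≤ ∑ t ∈ Icc 1 n, emptyRunCost a x P t := by
  obtain ⟨D, hD, hcost, -⟩ := exists_credit_le_sum_emptyRunCost hδ hsep n hserve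
  have hcount : ∑ t ∈ Icc 1 n, (if t ∈ S ∧ P t then δ else 0) = #{i ∈ S | P i} * δ := by
    rw [← sum_filter, ← nsmul_eq_mul, ← sum_const]
    congr 1
    ext t
    simp only [mem_filter]
    exact ⟨fun h => h.2, fun h => ⟨hS h.1, h⟩⟩
  linarith

end EmptyRunCost

theorem ktaxi_cost_lower_bound_of_separated_general
    {X : Type*} [MetricSpace X] {k n : ℕ}
    (a b : ℕ → X) {δ : ℝ} (hδ : 0 < δ)
    (S : Finset ℕ) (hS : S ⊆ Finset.Icc 1 n)
    (hsep : ∀ i ∈ S, ∀ j, 1 ≤ j → j < i → δ < dist (b j) (a i))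
    (c : ℕ → Fin k → X) (s : ℕ → Fin k)
    (hserve : ∀ t ∈ Finset.Icc 1 n, c t (s t) = b t) :
    ((S.card : ℝ) - k) * δ ≤
      ∑ t ∈ Finset.Icc 1 n,
        (dist (c (t - 1) (s t)) (a t) +
          ∑ i ∈ Finset.univ.erase (s t), dist (c (t - 1) i) (c t i)) := by
  have hcard : (S.card : ℝ) = ∑ p : Fin k, (#{i ∈ S | s i = p} : ℝ) := by
    exact_mod_cast card_eq_sum_card_fiberwise fun i _ => mem_univ (s i)
  calc ((S.card : ℝ) - k) * δ = ∑ p : Fin k, ((#{i ∈ S | s i = p} : ℝ) - 1) * δ := by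
        simp only [hcard, sub_mul, sum_sub_distrib, sum_mul, one_mul, sum_const, card_univ,
          Fintype.card_fin, nsmul_eq_mul]
    _ ≤ ∑ p : Fin k, ∑ t ∈ Icc 1 n, emptyRunCost a (fun u => c u p) (fun u => s u = p) t :=
        sum_le_sum fun p _ => card_filter_sub_one_mul_le_sum_emptyRunCost hδ.le hS hsep
          fun t ht hp => hp ▸ hserve t ht
    _ = _ := by
        rw [sum_comm]
        exact sum_congr rfl fun t _ => (dist_add_sum_erase_eq_sum_emptyRunCost a c s t).symm

/-- deterministic core of Lemma 3.2.
Let `(X,d)` be a metric space, `k ≥ 1`, `n ≥ 1`, `(a 1, b 1), …, (a n, b n)` be taxi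
requests, `c 0 : Fin k → X` an arbitrary initial configuration, and `δ > 0`.
Suppose `S ⊆ {1,…,n}` is a set of indices such that for every `i ∈ S` and every request
index `j < i` one has `d(b j, a i) > δ`. Then every `k`-taxi schedule `(c, s)` serving the
requests from `c 0` has empty-run cost at least `(|S| - k) · δ`. -/
theorem ktaxi_cost_lower_bound_of_separated
    {X : Type*} [MetricSpace X] {k n : ℕ} (hk : 1 ≤ k) (hn : 1 ≤ n)
    (a b : ℕ → X) {δ : ℝ} (hδ : 0 < δ)
    (S : Finset ℕ) (hS : S ⊆ Finset.Icc 1 n)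
    (hsep : ∀ i ∈ S, ∀ j, 1 ≤ j → j < i → δ < dist (b j) (a i))
    (c : ℕ → Fin k → X) (s : ℕ → Fin k)
    (hserve : ∀ t ∈ Finset.Icc 1 n, c t (s t) = b t) :
    ((S.card : ℝ) - k) * δ ≤
      ∑ t ∈ Finset.Icc 1 n,
        (dist (c (t - 1) (s t)) (a t) +
          ∑ i ∈ Finset.univ.erase (s t), dist (c (t - 1) i) (c t i)) :=
  ktaxi_cost_lower_bound_of_separated_general a b hδ S hS hsep c s hserve
end

section
/- Let E be a real normed vector space of finite dimension m ≥ 1, let B = closedBall(c,R) with R > 0, let σ ∈ (0,1], k ≥ 1, and set δ = R·(σ/(8k))^{1/m}. Suppose the requests r_1,…,r_T ∈ B are generated adaptively so that for each t the conditional distribution of r_t given r_1,…,r_{t−1} is (almost surely) σ-smooth with respect to B. Then for every initial configuration c_0 : Fin k → E, the expected optimal offline k-server cost satisfies E[opt_k(r_1,…,r_T; c_0)] ≥ (δ/8)·T − (k·δ)/2, i.e., E[opt] ≥ (R/8)·(σ/(8k))^{1/m}·T − (kR/2)·(σ/(8k))^{1/m}. -/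
/-!
An optimal schedule may be taken lazy (a server moves only to serve a request), so the optimum
is a minimum over the finitely many assignments of servers to requests. Cut time into blocks of
`3k` requests and call a request separated if it is at distance at least `δ / 2` from every
earlier request of its block. Under any assignment, all separated requests but at most `k` per
block are served by a server sitting on an earlier request of the same block, at cost at least
`δ / 2`. By smoothness, a request is `δ / 2`-close to a given earlier request with probability at
most `vol (closedBall δ) / (σ vol B) = 1 / (8k)`; the earlier request is known in advance, and
discretizing it reduces this to the smoothness bound for fixed sets. So a request is separated
with probability at least `5 / 8`, and
`E[opt] ≥ (δ / 2) (5T / 8 - k (T / (3k) + 1)) ≥ δT / 8 - kδ / 2`.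
-/

open MeasureTheory Metric Finset

section Blocks

def blockPredecessors (L t : ℕ) : Finset ℕ := {s ∈ Ico 1 t | s / L = t / L}

theorem card_blockPredecessors_le {L : ℕ} (hL : 0 < L) (t : ℕ) : #(blockPredecessors L t) ≤ L := by
  refine (card_le_card fun s hs => ?_).trans (Nat.card_Ico (t - L) t).le |>.trans (by omega)
  simp only [blockPredecessors, mem_filter, mem_Ico] at hs ⊢
  obtain ⟨⟨-, hst⟩, hblock⟩ := hs
  have hs := Nat.div_add_mod s L
  have ht := Nat.div_add_mod t L
  have := Nat.mod_lt s hL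
  have := Nat.mod_lt t hL
  rw [hblock] at hs
  generalize L * (t / L) = q at hs ht
  omega

/-- These are the times of `G` first in their block to be served by their server, and
`t ↦ (a t, t / L)` is injective on them. -/
theorem card_filter_forall_blockPredecessors_ne_le {k L T : ℕ} (a : ℕ → Fin k) {G : Finset ℕ}
    (hG : G ⊆ Icc 1 T) : #{t ∈ G | ∀ s ∈ blockPredecessors L t, a s ≠ a t} ≤ k * (T / L + 1) := by
  set Fr := {t ∈ G | ∀ s ∈ blockPredecessors L t, a s ≠ a t}
  have hmaps : ∀ t ∈ Fr, (a t, t / L) ∈ (univ : Finset (Fin k)) ×ˢ range (T / L + 1) := by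
    intro t ht
    have htT := (mem_Icc.mp (hG (mem_filter.mp ht).1)).2
    simpa [Nat.lt_succ_iff] using Nat.div_le_div_right htT
  have hinj : Set.InjOn (fun t => (a t, t / L)) Fr := by
    intro t ht t' ht' heq
    simp only [Fr, coe_filter, Set.mem_ofPred_eq, Prod.mk.injEq] at ht ht' heq
    have h1 := (mem_Icc.mp (hG ht.1)).1
    have h1' := (mem_Icc.mp (hG ht'.1)).1
    by_contra hne
    rcases lt_or_gt_of_ne hne with hlt | hlt
    · exact ht'.2 t (by simp [blockPredecessors, h1, hlt, heq.2]) heq.1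
    · exact ht.2 t' (by simp [blockPredecessors, h1', hlt, heq.2]) heq.1.symm
  simpa using card_le_card_of_injOn _ hmaps hinj

end Blocks

section LazySchedule

variable {X : Type*} {k : ℕ}

def lazySchedule (p : Fin k → X) (x : ℕ → X) (a : ℕ → Fin k) : ℕ → Fin k → X
  | 0 => p
  | t + 1 => Function.update (lazySchedule p x a t) (a (t + 1)) (x (t + 1))

variable (p : Fin k → X) (x : ℕ → X) (a : ℕ → Fin k)

theorem lazySchedule_zero : lazySchedule p x a 0 = p := rfl

theorem lazySchedule_succ (t : ℕ) :
    lazySchedule p x a (t + 1) = Function.update (lazySchedule p x a t) (a (t + 1)) (x (t + 1)) :=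
  rfl

theorem lazySchedule_apply_self {t : ℕ} (ht : 1 ≤ t) : lazySchedule p x a t (a t) = x t := by
  obtain ⟨n, rfl⟩ := Nat.exists_eq_add_of_le' ht
  simp [lazySchedule_succ]

theorem lazySchedule_apply_of_forall_ne {u n : ℕ} {i : Fin k} (hun : u ≤ n)
    (h : ∀ v ∈ Ioc u n, a v ≠ i) : lazySchedule p x a n i = lazySchedule p x a u i := by
  induction n, hun using Nat.le_induction with
  | base => rfl
  | succ n hun ih =>
    rw [lazySchedule_succ, Function.update_of_ne (h (n + 1) (by simp; omega)).symm]
    exact ih fun v hv => h v (by simp at hv ⊢; omega)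

theorem exists_mem_blockPredecessors_lazySchedule_eq {L t : ℕ}
    (h : ∃ s ∈ blockPredecessors L t, a s = a t) :
    ∃ u ∈ blockPredecessors L t, lazySchedule p x a (t - 1) (a t) = x u := by
  obtain ⟨s, hs, hsa⟩ := h
  simp only [blockPredecessors, mem_filter, mem_Ico] at hs
  set W := {v ∈ Ico 1 t | a v = a t}
  have hsW : s ∈ W := by simp [W, hs.1, hsa]
  set u := W.max' ⟨s, hsW⟩
  have huW : u ∈ W := W.max'_mem _
  simp only [W, mem_filter, mem_Ico] at huW
  have hsu : s ≤ u := W.le_max' s hsW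
  have hblock : u / L = t / L :=
    le_antisymm (Nat.div_le_div_right huW.1.2.le) (hs.2 ▸ Nat.div_le_div_right hsu)
  refine ⟨u, by simp [blockPredecessors, huW.1, hblock], ?_⟩
  rw [lazySchedule_apply_of_forall_ne p x a (by omega : u ≤ t - 1), ← huW.2,
    lazySchedule_apply_self p x a huW.1.1]
  intro v hv hva
  rw [mem_Ioc] at hv
  have := W.le_max' v (by simp [W, hva]; omega)
  omega

theorem measurable_lazySchedule {Ω : Type*} [MeasurableSpace Ω] [MeasurableSpace X]
    (r : ℕ → Ω → X) {T : ℕ} (hr : ∀ t ∈ Icc 1 T, Measurable (r t)) {n : ℕ} (hn : n ≤ T)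
    (i : Fin k) : Measurable fun ω => lazySchedule p (fun u => r u ω) a n i := by
  induction n generalizing i with
  | zero => exact measurable_const
  | succ n ih =>
    simp only [lazySchedule_succ, Function.update_apply]
    split_ifs
    · exact hr (n + 1) (by simp; omega)
    · exact ih (by omega) i

end LazySchedule

section Schedules

variable {X : Type*} [PseudoMetricSpace X] {k : ℕ}

noncomputable def scheduleCost (cfg : ℕ → Fin k → X) (T : ℕ) : ℝ :=
  ∑ t ∈ Icc 1 T, ∑ i, dist (cfg (t - 1) i) (cfg t i)

noncomputable def offlineOpt (p : Fin k → X) (x : ℕ → X) (T : ℕ) : ℝ :=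
  sInf {C | ∃ cfg : ℕ → Fin k → X, cfg 0 = p ∧ (∀ t ∈ Icc 1 T, ∃ i, cfg t i = x t) ∧
    C = scheduleCost cfg T}

theorem scheduleCost_nonneg (cfg : ℕ → Fin k → X) (T : ℕ) : 0 ≤ scheduleCost cfg T :=
  sum_nonneg fun _ _ => sum_nonneg fun _ _ => dist_nonneg

theorem scheduleCost_succ (cfg : ℕ → Fin k → X) (T : ℕ) :
    scheduleCost cfg (T + 1) = scheduleCost cfg T + ∑ i, dist (cfg T i) (cfg (T + 1) i) := by
  rw [scheduleCost, sum_Icc_succ_top (by omega), Nat.add_sub_cancel, scheduleCost]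

theorem scheduleCost_le_of_mem_closedBall {cfg : ℕ → Fin k → X} {T : ℕ} {c : X} {ρ : ℝ}
    (h : ∀ t ≤ T, ∀ i, cfg t i ∈ closedBall c ρ) : scheduleCost cfg T ≤ T * (k * (2 * ρ)) := by
  have hstep : ∀ t ∈ Icc 1 T, ∑ i, dist (cfg (t - 1) i) (cfg t i) ≤ k * (2 * ρ) := by
    intro t ht
    have htT := (mem_Icc.mp ht).2
    calc ∑ i, dist (cfg (t - 1) i) (cfg t i) ≤ ∑ _i : Fin k, 2 * ρ :=
          sum_le_sum fun i _ => (dist_triangle_right _ _ c).trans <| by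
            linarith [mem_closedBall.mp (h (t - 1) (by omega) i), mem_closedBall.mp (h t htT i)]
      _ = k * (2 * ρ) := by simp
  exact (sum_le_sum hstep).trans (by simp)

variable (p : Fin k → X) (x : ℕ → X) (a : ℕ → Fin k)

theorem lazySchedule_mem_closedBall {c : X} {ρ : ℝ} {n : ℕ} (hp : ∀ i, p i ∈ closedBall c ρ)
    (hx : ∀ t ∈ Icc 1 n, x t ∈ closedBall c ρ) (i : Fin k) :
    lazySchedule p x a n i ∈ closedBall c ρ := by
  induction n generalizing i with
  | zero => exact hp i
  | succ n ih =>
    rw [lazySchedule_succ, Function.update_apply]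
    split_ifs
    · exact hx (n + 1) (by simp)
    · exact ih (fun t ht => hx t (by simp at ht ⊢; omega)) i

theorem scheduleCost_lazySchedule (T : ℕ) :
    scheduleCost (lazySchedule p x a) T =
      ∑ t ∈ Icc 1 T, dist (lazySchedule p x a (t - 1) (a t)) (x t) := by
  refine sum_congr rfl fun t ht => ?_
  obtain ⟨n, rfl⟩ := Nat.exists_eq_add_of_le' (mem_Icc.mp ht).1
  rw [sum_eq_single (a (n + 1)) (fun i _ hi => by simp [lazySchedule_succ, hi]) (by simp)]
  simp [lazySchedule_succ]

/-- Potential argument: `∑ i, dist (lazySchedule p x a n i) (cfg n i)` plus the lazy cost up to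
time `n` never exceeds the cost of `cfg` up to time `n`. -/
theorem scheduleCost_lazySchedule_le {cfg : ℕ → Fin k → X} {T : ℕ} (h0 : cfg 0 = p)
    (hserve : ∀ t ∈ Icc 1 T, cfg t (a t) = x t) :
    scheduleCost (lazySchedule p x a) T ≤ scheduleCost cfg T := by
  suffices ∀ n ≤ T, ∑ i, dist (lazySchedule p x a n i) (cfg n i) +
      scheduleCost (lazySchedule p x a) n ≤ scheduleCost cfg n by
    linarith [this T le_rfl, sum_nonneg fun i (_ : i ∈ univ) =>
      dist_nonneg (x := lazySchedule p x a T i) (y := cfg T i)]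
  intro n hn
  induction n with
  | zero => simp [scheduleCost, lazySchedule_zero, h0]
  | succ n ih =>
    have hstep : ∀ i, dist (lazySchedule p x a (n + 1) i) (cfg (n + 1) i) +
        dist (lazySchedule p x a n i) (lazySchedule p x a (n + 1) i) ≤
          dist (lazySchedule p x a n i) (cfg n i) + dist (cfg n i) (cfg (n + 1) i) := by
      intro i
      have hcases : lazySchedule p x a (n + 1) i = lazySchedule p x a n i ∨
          lazySchedule p x a (n + 1) i = cfg (n + 1) i := by
        rw [lazySchedule_succ, Function.update_apply]
        split_ifs with hi
        · exact .inr (hi ▸ (hserve (n + 1) (by simp; omega)).symm)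
        · exact .inl rfl
      rcases hcases with h | h <;> rw [h] <;> simp only [dist_self] <;>
        linarith [dist_triangle (lazySchedule p x a n i) (cfg n i) (cfg (n + 1) i),
          dist_comm (lazySchedule p x a n i) (cfg (n + 1) i)]
    have := sum_le_sum fun i (_ : i ∈ univ) => hstep i
    rw [sum_add_distrib, sum_add_distrib] at this
    rw [scheduleCost_succ, scheduleCost_succ]
    linarith [ih (by omega)]

noncomputable def separatedTimes (x : ℕ → X) (L T : ℕ) (ρ : ℝ) : Finset ℕ :=
  {t ∈ Icc 1 T | ∀ s ∈ blockPredecessors L t, ρ ≤ dist (x s) (x t)}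

/-- A separated request costs `ρ` unless it is the first of its block served by its server,
and there are at most `k` such first requests per block. -/
theorem scheduleCost_lazySchedule_ge {L T : ℕ} {ρ : ℝ} (hρ : 0 ≤ ρ) :
    ρ * (#(separatedTimes x L T ρ) - (k * (T / L + 1) : ℕ)) ≤
      scheduleCost (lazySchedule p x a) T := by
  set G := separatedTimes x L T ρ
  have hGT : G ⊆ Icc 1 T := filter_subset _ _
  set Fr := {t ∈ G | ∀ s ∈ blockPredecessors L t, a s ≠ a t}
  have hFr := card_filter_forall_blockPredecessors_ne_le a hGT (L := L)
  have hcard : (#G : ℝ) - (k * (T / L + 1) : ℕ) ≤ #(G \ Fr) := by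
    have := card_le_card_sdiff_add_card (s := G) (t := Fr)
    have : (#G : ℝ) ≤ #(G \ Fr) + #Fr := by exact_mod_cast this
    have : (#Fr : ℝ) ≤ (k * (T / L + 1) : ℕ) := by exact_mod_cast hFr
    linarith
  have hstep : ∀ t ∈ G \ Fr, ρ ≤ dist (lazySchedule p x a (t - 1) (a t)) (x t) := by
    intro t ht
    simp only [Fr, mem_sdiff, mem_filter, not_and, not_forall, not_not] at ht
    obtain ⟨s, hs, hsa⟩ := ht.2 ht.1
    obtain ⟨u, hu, hpos⟩ := exists_mem_blockPredecessors_lazySchedule_eq p x a ⟨s, hs, hsa⟩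
    rw [hpos]
    exact (mem_filter.mp ht.1).2 u hu
  calc ρ * (#G - (k * (T / L + 1) : ℕ)) ≤ ∑ _t ∈ G \ Fr, ρ := by
        rw [sum_const, nsmul_eq_mul, mul_comm (#(G \ Fr) : ℝ)]
        exact mul_le_mul_of_nonneg_left hcard hρ
    _ ≤ ∑ t ∈ G \ Fr, dist (lazySchedule p x a (t - 1) (a t)) (x t) := sum_le_sum hstep
    _ ≤ ∑ t ∈ Icc 1 T, dist (lazySchedule p x a (t - 1) (a t)) (x t) :=
        sum_le_sum_of_subset_of_nonneg (sdiff_subset.trans hGT) fun _ _ _ => dist_nonneg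
    _ = scheduleCost (lazySchedule p x a) T := (scheduleCost_lazySchedule p x a T).symm

/-- An optimal schedule may be taken lazy, so the optimum is a minimum over finitely many
assignments of servers to the requests `1, …, T`. -/
theorem offlineOpt_eq_inf' [Nonempty (Fin k)] (T : ℕ) :
    offlineOpt p x T = (univ : Finset (Fin (T + 1) → Fin k)).inf' univ_nonempty
      fun b => scheduleCost (lazySchedule p x fun t => b (Fin.ofNat _ t)) T := by
  apply IsLeast.csInf_eq
  constructor
  · obtain ⟨b, -, hb⟩ := exists_mem_eq_inf' (univ_nonempty (α := Fin (T + 1) → Fin k))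
      fun b => scheduleCost (lazySchedule p x fun t => b (Fin.ofNat _ t)) T
    rw [hb]
    exact ⟨_, rfl, fun t ht => ⟨_, lazySchedule_apply_self _ _ _ (mem_Icc.mp ht).1⟩, rfl⟩
  · rintro _ ⟨cfg, h0, hserve, rfl⟩
    have : ∀ j : Fin (T + 1), ∃ i, (j : ℕ) ∈ Icc 1 T → cfg j i = x j := by
      intro j
      by_cases hj : (j : ℕ) ∈ Icc 1 T
      · obtain ⟨i, hi⟩ := hserve j hj
        exact ⟨i, fun _ => hi⟩
      · exact ⟨Classical.arbitrary _, fun h => absurd h hj⟩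
    choose b hb using this
    refine (inf'_le _ (mem_univ b)).trans (scheduleCost_lazySchedule_le p x _ h0 fun t ht => ?_)
    have hval : (Fin.ofNat (T + 1) t : ℕ) = t :=
      Nat.mod_eq_of_lt (Nat.lt_succ_of_le (mem_Icc.mp ht).2)
    have := hb (Fin.ofNat _ t)
    rw [hval] at this
    exact this ht

theorem offlineOpt_ge [Nonempty (Fin k)] {L T : ℕ} {ρ : ℝ} (hρ : 0 ≤ ρ) :
    ρ * (#(separatedTimes x L T ρ) - (k * (T / L + 1) : ℕ)) ≤ offlineOpt p x T := by
  rw [offlineOpt_eq_inf']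
  exact le_inf' _ _ fun b _ => scheduleCost_lazySchedule_ge p x _ hρ

theorem offlineOpt_nonneg [Nonempty (Fin k)] (T : ℕ) : 0 ≤ offlineOpt p x T := by
  rw [offlineOpt_eq_inf']
  exact le_inf' _ _ fun b _ => scheduleCost_nonneg _ _

theorem measurable_offlineOpt [Nonempty (Fin k)] {Ω : Type*} [MeasurableSpace Ω]
    [MeasurableSpace X] [OpensMeasurableSpace X] [SecondCountableTopology X]
    (r : ℕ → Ω → X) {T : ℕ} (hr : ∀ t ∈ Icc 1 T, Measurable (r t)) :
    Measurable fun ω => offlineOpt p (fun u => r u ω) T := by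
  have hcost : ∀ b : Fin (T + 1) → Fin k,
      Measurable fun ω =>
        scheduleCost (lazySchedule p (fun u => r u ω) fun t => b (Fin.ofNat _ t)) T :=
    fun b => Finset.measurable_sum _ fun t ht => Finset.measurable_sum _ fun i _ =>
      (measurable_lazySchedule p _ r hr (by simp at ht; omega) i).dist
        (measurable_lazySchedule p _ r hr (mem_Icc.mp ht).2 i)
  simp_rw [offlineOpt_eq_inf']
  convert Finset.inf'_induction univ_nonempty _ (p := Measurable)
    (fun _ hf _ hg => hf.inf hg) (fun b _ => hcost b) using 1
  ext ω
  simp [Finset.inf'_apply]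

end Schedules

section Probability

open scoped ENNReal

variable {Ω : Type*}

theorem measureReal_inter_le_of_condExp_indicator_le {m m0 : MeasurableSpace Ω} {μ : Measure Ω}
    [IsFiniteMeasure μ] (hm : m ≤ m0) {s : Set Ω} (hs : MeasurableSet s) {c : ℝ}
    (hc : ∀ᵐ ω ∂μ, μ[s.indicator 1 | m] ω ≤ c) {A : Set Ω} (hA : MeasurableSet[m] A) :
    μ.real (A ∩ s) ≤ c * μ.real A := by
  have hint : Integrable (s.indicator (1 : Ω → ℝ)) μ := (integrable_const 1).indicator hs
  calc μ.real (A ∩ s) = ∫ ω in A, s.indicator 1 ω ∂μ := by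
        rw [integral_indicator_one hs, measureReal_restrict_apply hs, Set.inter_comm]
    _ = ∫ ω in A, μ[s.indicator 1 | m] ω ∂μ := (setIntegral_condExp hm hint hA).symm
    _ ≤ ∫ _ in A, c ∂μ :=
        setIntegral_mono_ae integrable_condExp.integrableOn (integrableOn_const (by simp)) hc
    _ = c * μ.real A := by rw [setIntegral_const, smul_eq_mul, mul_comm]

/-- Partition the space into countably many pieces, each inside a ball of radius `ε`, and split
according to the piece containing `X`. -/
theorem measure_dist_lt_le_of_forall_closedBall [MeasurableSpace Ω] {μ : Measure Ω}
    {E : Type*} [PseudoMetricSpace E] [TopologicalSpace.SeparableSpace E] [Nonempty E]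
    [MeasurableSpace E] [OpensMeasurableSpace E] {X Y : Ω → E} (hX : Measurable X) {ρ ε : ℝ}
    (hε : 0 < ε) {p : ℝ≥0∞}
    (h : ∀ q S, MeasurableSet S → μ (X ⁻¹' S ∩ Y ⁻¹' closedBall q (ρ + ε)) ≤ p * μ (X ⁻¹' S)) :
    μ {ω | dist (X ω) (Y ω) < ρ} ≤ p * μ Set.univ := by
  set e := TopologicalSpace.denseSeq E
  set piece := disjointed fun n => ball (e n) ε
  have hpiece : ∀ n, MeasurableSet (piece n) :=
    MeasurableSet.disjointed fun _ => measurableSet_ball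
  have hcover : ∀ z, ∃ n, z ∈ piece n := by
    intro z
    obtain ⟨n, hn⟩ := (TopologicalSpace.denseRange_denseSeq E).exists_dist_lt z hε
    have : z ∈ ⋃ n, piece n := by rw [iUnion_disjointed]; exact Set.mem_iUnion.mpr ⟨n, hn⟩
    exact Set.mem_iUnion.mp this
  have hsub : {ω | dist (X ω) (Y ω) < ρ} ⊆
      ⋃ n, X ⁻¹' piece n ∩ Y ⁻¹' closedBall (e n) (ρ + ε) := by
    intro ω hω
    obtain ⟨n, hn⟩ := hcover (X ω)
    have hXn : dist (X ω) (e n) < ε := disjointed_subset _ n hn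
    refine Set.mem_iUnion.mpr ⟨n, hn, ?_⟩
    rw [Set.mem_preimage, mem_closedBall]
    linarith [dist_triangle_left (Y ω) (e n) (X ω), dist_comm (Y ω) (X ω), hω.out]
  calc μ {ω | dist (X ω) (Y ω) < ρ}
      ≤ ∑' n, μ (X ⁻¹' piece n ∩ Y ⁻¹' closedBall (e n) (ρ + ε)) :=
        (measure_mono hsub).trans (measure_iUnion_le _)
    _ ≤ ∑' n, p * μ (X ⁻¹' piece n) := ENNReal.tsum_le_tsum fun n => h _ _ (hpiece n)
    _ = p * μ (⋃ n, X ⁻¹' piece n) := by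
        rw [ENNReal.tsum_mul_left, measure_iUnion
          (fun i j hij => (disjoint_disjointed _ hij).preimage X) fun n => hX (hpiece n)]
    _ ≤ p * μ Set.univ := by gcongr; exact Set.subset_univ _

theorem le_measureReal_setOf_forall_mem [MeasurableSpace Ω] {μ : Measure Ω}
    [IsProbabilityMeasure μ] {ι : Type*} (W : Finset ι) {B : ι → Set Ω} {p : ℝ}
    (hB : ∀ i ∈ W, μ.real (B i) ≤ p) : 1 - #W * p ≤ μ.real {ω | ∀ i ∈ W, ω ∉ B i} := by
  have hcompl : {ω | ∀ i ∈ W, ω ∉ B i}ᶜ = ⋃ i ∈ W, B i := by ext; simp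
  have := (measureReal_biUnion_finset_le W B).trans (sum_le_sum hB)
  rw [← hcompl, sum_const, nsmul_eq_mul] at this
  have hunion := measureReal_union_le (μ := μ) {ω | ∀ i ∈ W, ω ∉ B i} {ω | ∀ i ∈ W, ω ∉ B i}ᶜ
  rw [Set.union_compl_self, probReal_univ] at hunion
  linarith

theorem integral_card_filter [MeasurableSpace Ω] {μ : Measure Ω} [IsFiniteMeasure μ]
    {ι : Type*} (s : Finset ι) (P : ι → Ω → Prop) [∀ ω, DecidablePred (P · ω)]
    (hP : ∀ i ∈ s, MeasurableSet {ω | P i ω}) :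
    ∫ ω, (#{i ∈ s | P i ω} : ℝ) ∂μ = ∑ i ∈ s, μ.real {ω | P i ω} := by
  simp_rw [card_filter, Nat.cast_sum, Nat.cast_ite, Nat.cast_one, Nat.cast_zero]
  rw [integral_finsetSum _ fun i hi => (integrable_const 1).indicator (hP i hi) |>.congr
    (Filter.Eventually.of_forall fun ω => by simp [Set.indicator_apply])]
  refine sum_congr rfl fun i hi => ?_
  rw [← integral_indicator_one (hP i hi)]
  congr 1 with ω
  simp [Set.indicator_apply]

theorem integrable_card_filter [MeasurableSpace Ω] {μ : Measure Ω} [IsFiniteMeasure μ]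
    {ι : Type*} (s : Finset ι) (P : ι → Ω → Prop) [∀ ω, DecidablePred (P · ω)]
    (hP : ∀ i ∈ s, MeasurableSet {ω | P i ω}) :
    Integrable (fun ω => (#{i ∈ s | P i ω} : ℝ)) μ :=
  (integrable_finsetSum s fun i hi => (integrable_const 1).indicator (hP i hi)).congr
    (Filter.Eventually.of_forall fun ω => by
      simp only [card_filter, Nat.cast_sum, Nat.cast_ite, Nat.cast_one, Nat.cast_zero,
        Set.indicator_apply, Set.mem_ofPred_eq])

end Probability

section Smoothness

variable {E : Type*} [NormedAddCommGroup E] [NormedSpace ℝ E] [MeasurableSpace E] [BorelSpace E]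
  [FiniteDimensional ℝ E]

theorem addHaar_closedBall_toReal_div (μ : Measure E) [μ.IsAddHaarMeasure] (x y : E) {r R : ℝ}
    (hr : 0 ≤ r) (hR : 0 < R) :
    (μ (closedBall x r)).toReal / (μ (closedBall y R)).toReal = (r / R) ^ Module.finrank ℝ E := by
  have hV : 0 < (μ (ball (0 : E) 1)).toReal :=
    ENNReal.toReal_pos (measure_ball_pos μ 0 one_pos).ne' measure_ball_lt_top.ne
  rw [Measure.addHaar_closedBall μ x hr, Measure.addHaar_closedBall μ y hR.le, ENNReal.toReal_mul,
    ENNReal.toReal_mul, ENNReal.toReal_ofReal (by positivity),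
    ENNReal.toReal_ofReal (by positivity),
    mul_div_mul_right _ _ hV.ne', div_pow]

theorem div_pow_eq_of_eq_mul_rpow {R a δ : ℝ} {m : ℕ} (hR : 0 < R) (ha : 0 ≤ a) (hm : m ≠ 0)
    (hδ : δ = R * a ^ ((1 : ℝ) / m)) : (δ / R) ^ m = a := by
  rw [hδ, mul_div_cancel_left₀ _ hR.ne', one_div, Real.rpow_inv_natCast_pow ha hm]

variable {Ω : Type*}

theorem measureReal_dist_lt_le_of_condExp_indicator_le (vol : Measure E) [vol.IsAddHaarMeasure]
    {c : E} {R σ : ℝ} (hR : 0 < R) (hσ : 0 < σ) {m m0 : MeasurableSpace Ω} {P : Measure Ω}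
    [IsProbabilityMeasure P] (hm : m ≤ m0) {X Y : Ω → E} (hX : Measurable[m] X)
    (hY : Measurable Y) (hYB : ∀ᵐ ω ∂P, Y ω ∈ closedBall c R)
    (hsmooth : ∀ S : Set E, S ⊆ closedBall c R → MeasurableSet S →
      ∀ᵐ ω ∂P, (P[fun ω' => S.indicator (fun _ => (1 : ℝ)) (Y ω') | m]) ω ≤
        (vol S).toReal / (σ * (vol (closedBall c R)).toReal))
    {ρ : ℝ} (hρ : 0 < ρ) :
    P.real {ω | dist (X ω) (Y ω) < ρ} ≤ (2 * ρ / R) ^ Module.finrank ℝ E / σ := by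
  set p := (2 * ρ / R) ^ Module.finrank ℝ E / σ
  have hball : ∀ q S, MeasurableSet S →
      P (X ⁻¹' S ∩ Y ⁻¹' closedBall q (ρ + ρ)) ≤ ENNReal.ofReal p * P (X ⁻¹' S) := by
    intro q S hS
    set S' := closedBall q (ρ + ρ) ∩ closedBall c R
    have hS' : MeasurableSet S' := measurableSet_closedBall.inter measurableSet_closedBall
    have hratio : (vol S').toReal / (σ * (vol (closedBall c R)).toReal) ≤ p := by
      have h := addHaar_closedBall_toReal_div vol q c (by positivity : 0 ≤ ρ + ρ) hR
      rw [← two_mul] at h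
      rw [mul_comm, ← div_div, show p = _ / σ from rfl, ← h]
      gcongr
      · exact measure_closedBall_lt_top.ne
      · exact Set.inter_subset_left.trans (closedBall_subset_closedBall (by linarith))
    have hreal := measureReal_inter_le_of_condExp_indicator_le hm (hY hS')
      (hsmooth S' Set.inter_subset_right hS') (hX hS)
    calc P (X ⁻¹' S ∩ Y ⁻¹' closedBall q (ρ + ρ)) ≤ P (X ⁻¹' S ∩ Y ⁻¹' S') :=
          measure_mono_ae <| hYB.mono fun ω hω h => ⟨h.1, h.2, hω⟩
      _ = ENNReal.ofReal (P.real (X ⁻¹' S ∩ Y ⁻¹' S')) :=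
          (ofReal_measureReal (measure_ne_top _ _)).symm
      _ ≤ ENNReal.ofReal (p * P.real (X ⁻¹' S)) := by
          gcongr
          exact hreal.trans (by gcongr)
      _ = ENNReal.ofReal p * P (X ⁻¹' S) := by
          rw [ENNReal.ofReal_mul (by positivity), ofReal_measureReal (measure_ne_top _ _)]
  have := measure_dist_lt_le_of_forall_closedBall (hX.mono hm le_rfl) hρ hball
  rw [measure_univ, mul_one] at this
  exact ENNReal.toReal_le_of_le_ofReal (by positivity) this

end Smoothness

section Expectation

variable {X Ω : Type*} [PseudoMetricSpace X] [MeasurableSpace X] [OpensMeasurableSpace X]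
  [SecondCountableTopology X] [MeasurableSpace Ω] {P : Measure Ω} [IsProbabilityMeasure P]
  {r : ℕ → Ω → X} {T : ℕ}

theorem measurableSet_setOf_forall_blockPredecessors (hr : ∀ t ∈ Icc 1 T, Measurable (r t))
    {L t : ℕ} (ht : t ∈ Icc 1 T) (ρ : ℝ) :
    MeasurableSet {ω | ∀ s ∈ blockPredecessors L t, ρ ≤ dist (r s ω) (r t ω)} := by
  simp only [Set.ofPred_forall]
  refine Finset.measurableSet_biInter _ fun s hs => measurableSet_le measurable_const ?_
  have : s ∈ Icc 1 T := by simp [blockPredecessors] at hs ht ⊢; omega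
  exact (hr s this).dist (hr t ht)

theorem le_integral_card_separatedTimes (hr : ∀ t ∈ Icc 1 T, Measurable (r t)) {L : ℕ}
    (hL : 0 < L) {ρ p : ℝ} (hp : 0 ≤ p)
    (hclose : ∀ t ∈ Icc 1 T, ∀ s ∈ blockPredecessors L t,
      P.real {ω | dist (r s ω) (r t ω) < ρ} ≤ p) :
    (1 - L * p) * T ≤ ∫ ω, (#(separatedTimes (fun u => r u ω) L T ρ) : ℝ) ∂P := by
  unfold separatedTimes
  rw [integral_card_filter _ _
    fun t ht => measurableSet_setOf_forall_blockPredecessors hr ht ρ]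
  calc (1 - L * p) * T = ∑ _t ∈ Icc 1 T, (1 - L * p) := by simp; ring
    _ ≤ _ := sum_le_sum fun t ht => by
      have hW : (#(blockPredecessors L t) : ℝ) ≤ L := by
        exact_mod_cast card_blockPredecessors_le hL t
      have := le_measureReal_setOf_forall_mem _ (hclose t ht)
      simp only [Set.mem_ofPred_eq, not_lt] at this
      nlinarith

theorem integrable_card_separatedTimes (hr : ∀ t ∈ Icc 1 T, Measurable (r t)) (L : ℕ) (ρ : ℝ) :
    Integrable (fun ω => (#(separatedTimes (fun u => r u ω) L T ρ) : ℝ)) P := by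
  unfold separatedTimes
  exact integrable_card_filter _ _ fun t ht => measurableSet_setOf_forall_blockPredecessors hr ht ρ

theorem integrable_offlineOpt {k : ℕ} [Nonempty (Fin k)] (p : Fin k → X)
    (hr : ∀ t ∈ Icc 1 T, Measurable (r t)) {c : X} {R : ℝ}
    (hB : ∀ t ∈ Icc 1 T, ∀ᵐ ω ∂P, r t ω ∈ closedBall c R) :
    Integrable (fun ω => offlineOpt p (fun u => r u ω) T) P := by
  set ρ := |R| + ∑ i, dist (p i) c
  have hp : ∀ i, p i ∈ closedBall c ρ := fun i =>
    (single_le_sum (fun j _ => dist_nonneg) (mem_univ i)).trans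
      (le_add_of_nonneg_left (abs_nonneg R))
  have hbound : ∀ᵐ ω ∂P, ‖offlineOpt p (fun u => r u ω) T‖ ≤ T * (k * (2 * ρ)) := by
    filter_upwards [(Filter.eventually_all_finset _).mpr hB] with ω hω
    rw [Real.norm_of_nonneg (offlineOpt_nonneg _ _ _), offlineOpt_eq_inf']
    refine (inf'_le _ (mem_univ fun _ => Classical.arbitrary _)).trans
      (scheduleCost_le_of_mem_closedBall fun t ht i => lazySchedule_mem_closedBall _ _ _ hp
        (fun u hu => closedBall_subset_closedBall ?_ (hω u ?_)) i)
    · linarith [le_abs_self R, sum_nonneg fun i (_ : i ∈ univ) => dist_nonneg (x := p i) (y := c)]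
    · simp only [mem_Icc] at hu ⊢
      omega
  exact Integrable.of_bound (measurable_offlineOpt p r hr).aestronglyMeasurable _ hbound

theorem le_integral_offlineOpt {k : ℕ} [Nonempty (Fin k)] (p : Fin k → X)
    (hr : ∀ t ∈ Icc 1 T, Measurable (r t)) {c : X} {R : ℝ}
    (hB : ∀ t ∈ Icc 1 T, ∀ᵐ ω ∂P, r t ω ∈ closedBall c R) {L : ℕ} (hL : 0 < L) {ρ q : ℝ}
    (hρ : 0 ≤ ρ) (hq : 0 ≤ q)
    (hclose : ∀ t ∈ Icc 1 T, ∀ s ∈ blockPredecessors L t,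
      P.real {ω | dist (r s ω) (r t ω) < ρ} ≤ q) :
    ρ * ((1 - L * q) * T - (k * (T / L + 1) : ℕ)) ≤
      ∫ ω, offlineOpt p (fun u => r u ω) T ∂P := by
  have hsep := integrable_card_separatedTimes (P := P) hr L ρ
  calc ρ * ((1 - L * q) * T - (k * (T / L + 1) : ℕ))
      ≤ ρ * (∫ ω, (#(separatedTimes (fun u => r u ω) L T ρ) : ℝ) ∂P - (k * (T / L + 1) : ℕ)) := by
        gcongr
        exact le_integral_card_separatedTimes hr hL hq hclose
    _ = ∫ ω, ρ * (#(separatedTimes (fun u => r u ω) L T ρ) - (k * (T / L + 1) : ℕ)) ∂P := by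
        rw [integral_const_mul, integral_sub hsep (integrable_const _), integral_const]
        simp
    _ ≤ ∫ ω, offlineOpt p (fun u => r u ω) T ∂P :=
        integral_mono ((hsep.sub (integrable_const _)).const_mul ρ)
          (integrable_offlineOpt p hr hB) fun ω => offlineOpt_ge p _ hρ

end Expectation

theorem kserver_smoothed_opt_lower_bound_general
    {E : Type*} [NormedAddCommGroup E] [NormedSpace ℝ E]
    [MeasurableSpace E] [BorelSpace E] [FiniteDimensional ℝ E]
    {m : ℕ} (hm : 1 ≤ m) (hdim : Module.finrank ℝ E = m)
    (vol : Measure E) [vol.IsAddHaarMeasure]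
    (c : E) {R : ℝ} (hR : 0 < R) {σ : ℝ} (hσ0 : 0 < σ)
    {k : ℕ} (hk : 1 ≤ k) {δ : ℝ} (hδ : δ = R * (σ / (8 * k)) ^ ((1 : ℝ) / m))
    {Ω : Type*} {m0 : MeasurableSpace Ω} (P : Measure Ω) [IsProbabilityMeasure P]
    (T : ℕ) (F : Filtration ℕ m0) (r : ℕ → Ω → E)
    (hadapted : ∀ t ∈ Finset.Icc 1 T, Measurable[F t] (r t))
    (hsupp : ∀ t ∈ Finset.Icc 1 T, ∀ᵐ ω ∂P, r t ω ∈ closedBall c R)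
    (hsmooth : ∀ t ∈ Finset.Icc 1 T, ∀ S : Set E, S ⊆ closedBall c R → MeasurableSet S →
      ∀ᵐ ω ∂P,
        (P[fun ω' => S.indicator (fun _ => (1 : ℝ)) (r t ω') | F (t - 1)]) ω ≤
          (vol S).toReal / (σ * (vol (closedBall c R)).toReal))
    (c₀ : Fin k → E) :
    (δ / 8) * T - (k * δ) / 2 ≤
      ∫ ω, sInf {x : ℝ | ∃ cfg : ℕ → Fin k → E, cfg 0 = c₀ ∧
        (∀ t ∈ Finset.Icc 1 T, ∃ i, cfg t i = r t ω) ∧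
        x = ∑ t ∈ Finset.Icc 1 T, ∑ i, dist (cfg (t - 1) i) (cfg t i)} ∂P := by
  have : Nonempty (Fin k) := ⟨⟨0, hk⟩⟩
  have hδ0 : 0 < δ := hδ ▸ mul_pos hR (Real.rpow_pos_of_pos (by positivity) _)
  have hr : ∀ t ∈ Icc 1 T, Measurable (r t) := fun t ht => (hadapted t ht).mono (F.le t) le_rfl
  have hclose : ∀ t ∈ Icc 1 T, ∀ s ∈ blockPredecessors (3 * k) t,
      P.real {ω | dist (r s ω) (r t ω) < δ / 2} ≤ 1 / (8 * k) := by
    intro t ht s hs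
    have hst : s ∈ Icc 1 T ∧ s ≤ t - 1 := by simp [blockPredecessors] at hs ht ⊢; omega
    calc _ ≤ (2 * (δ / 2) / R) ^ Module.finrank ℝ E / σ :=
          measureReal_dist_lt_le_of_condExp_indicator_le vol hR hσ0 (F.le _)
            ((hadapted s hst.1).mono (F.mono hst.2) le_rfl) (hr t ht) (hsupp t ht)
            (hsmooth t ht) (half_pos hδ0)
      _ = 1 / (8 * k) := by
          rw [mul_div_cancel₀ _ two_ne_zero, hdim,
            div_pow_eq_of_eq_mul_rpow hR (by positivity) (by omega) hδ]
          field_simp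
  have hopt := le_integral_offlineOpt c₀ hr hsupp (by omega : 0 < 3 * k) (half_pos hδ0).le
    (by positivity) hclose
  have hblocks : ((3 * k * (T / (3 * k)) : ℕ) : ℝ) ≤ T := by exact_mod_cast Nat.mul_div_le T _
  change _ ≤ ∫ ω, offlineOpt c₀ (fun u => r u ω) T ∂P
  refine le_trans ?_ hopt
  push_cast at hblocks ⊢
  field_simp
  nlinarith [mul_le_mul_of_nonneg_left hblocks hδ0.le]

/-- Lemma 3.1 of the paper, deterministic horizon `T`.
Let `E` be a real normed vector space of finite dimension `m ≥ 1`, let `B = closedBall c R`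
with `R > 0`, `σ ∈ (0,1]`, `k ≥ 1`, and set `δ = R·(σ/(8k))^{1/m}`. Suppose the requests
`r 1, …, r T ∈ B` are generated adaptively so that for each `t` the conditional distribution
of `r t` given the past (encoded by a filtration `F` to which the requests are adapted) is
almost surely `σ`-smooth with respect to `B`: for every measurable `S ⊆ B`, the conditional
probability that `r t ∈ S` given `F (t-1)` is a.s. at most `vol S / (σ · vol B)`. Then for
every initial configuration `c₀ : Fin k → E`, the expected optimal offline `k`-server cost
is at least `(δ/8)·T - (k·δ)/2`. -/
theorem kserver_smoothed_opt_lower_bound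
    {E : Type*} [NormedAddCommGroup E] [NormedSpace ℝ E]
    [MeasurableSpace E] [BorelSpace E] [FiniteDimensional ℝ E]
    {m : ℕ} (hm : 1 ≤ m) (hdim : Module.finrank ℝ E = m)
    (vol : Measure E) [vol.IsAddHaarMeasure]
    (c : E) {R : ℝ} (hR : 0 < R) {σ : ℝ} (hσ0 : 0 < σ) (hσ1 : σ ≤ 1)
    {k : ℕ} (hk : 1 ≤ k) {δ : ℝ} (hδ : δ = R * (σ / (8 * k)) ^ ((1 : ℝ) / m))
    {Ω : Type*} {m0 : MeasurableSpace Ω} (P : Measure Ω) [IsProbabilityMeasure P]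
    (T : ℕ) (F : Filtration ℕ m0) (r : ℕ → Ω → E)
    (hadapted : ∀ t ∈ Finset.Icc 1 T, Measurable[F t] (r t))
    (hsupp : ∀ t ∈ Finset.Icc 1 T, ∀ᵐ ω ∂P, r t ω ∈ closedBall c R)
    (hsmooth : ∀ t ∈ Finset.Icc 1 T, ∀ S : Set E, S ⊆ closedBall c R → MeasurableSet S →
      ∀ᵐ ω ∂P,
        (P[fun ω' => S.indicator (fun _ => (1 : ℝ)) (r t ω') | F (t - 1)]) ω ≤
          (vol S).toReal / (σ * (vol (closedBall c R)).toReal))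
    (c₀ : Fin k → E) :
    (δ / 8) * T - (k * δ) / 2 ≤
      ∫ ω, sInf {x : ℝ | ∃ cfg : ℕ → Fin k → E, cfg 0 = c₀ ∧
        (∀ t ∈ Finset.Icc 1 T, ∃ i, cfg t i = r t ω) ∧
        x = ∑ t ∈ Finset.Icc 1 T, ∑ i, dist (cfg (t - 1) i) (cfg t i)} ∂P :=
  kserver_smoothed_opt_lower_bound_general hm hdim vol c hR hσ0 hk hδ P T F r hadapted hsupp hsmooth
    c₀
end

section
/- Let E be a real normed vector space of finite dimension m ≥ 1, let B = closedBall(c,R) with R > 0, let σ ∈ (0,1], k ≥ 1, and δ > 0. Let y_1,…,y_k ∈ E be fixed points and let μ be a probability measure on E^k (tuples x = (x_1,…,x_k)) such that each coordinate marginal of μ is σ-smooth with respect to B. Then μ{x : ∃ i,j ∈ {1,…,k}, ‖x_j − y_i‖ ≤ δ} ≤ (k²/σ)·(δ/R)^m; in particular, for δ = R·(σ/(2k²))^{1/m} this probability is at most 1/2. -/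
open MeasureTheory Metric

/-- A probability measure `μ` on `E` is `σ`-smooth with respect to the closed ball
`B = closedBall c R` (relative to a Haar measure `vol` on `E`) if `μ` is supported on `B`
and `μ S ≤ vol S / (σ · vol B)` for every Borel set `S`. -/
def IsSmoothWrt {E : Type*} [MeasurableSpace E] [NormedAddCommGroup E]
    (vol μ : Measure E) (σ : ℝ) (c : E) (R : ℝ) : Prop :=
  μ (closedBall c R)ᶜ = 0 ∧
    ∀ S : Set E, MeasurableSet S →
      μ S ≤ vol S / (ENNReal.ofReal σ * vol (closedBall c R))

/-!
Each event `dist (x j) (y i) ≤ δ` is the preimage of a ball of radius `δ` under the `j`-th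
coordinate, so by smoothness and the scaling `vol (closedBall x r) = r ^ m · vol (ball 0 1)` of
Haar measure it has probability at most `(δ / R) ^ m / σ`; a union bound over the `k²` pairs
`(i, j)` gives the estimate, and the choice of `δ` makes `(δ / R) ^ m = σ / (2 k²)`.
-/

open Module

theorem IsSmoothWrt.measure_closedBall_le {E : Type*} [NormedAddCommGroup E] [NormedSpace ℝ E]
    [MeasurableSpace E] [BorelSpace E] [FiniteDimensional ℝ E]
    {vol ν : Measure E} [vol.IsAddHaarMeasure] {σ : ℝ} {c : E} {R : ℝ}
    (h : IsSmoothWrt vol ν σ c R) (hσ : 0 < σ) (hR : 0 < R) (x : E) {r : ℝ} (hr : 0 ≤ r) :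
    ν (closedBall x r) ≤ ENNReal.ofReal ((r / R) ^ finrank ℝ E / σ) := by
  set d := finrank ℝ E
  have hV0 : vol (ball (0 : E) 1) ≠ 0 := (measure_ball_pos vol 0 one_pos).ne'
  have hVtop : vol (ball (0 : E) 1) ≠ ⊤ := measure_ball_lt_top.ne
  calc ν (closedBall x r)
      ≤ vol (closedBall x r) / (ENNReal.ofReal σ * vol (closedBall c R)) :=
        h.2 _ measurableSet_closedBall
    _ = ENNReal.ofReal (r ^ d) * vol (ball 0 1) /
          (ENNReal.ofReal σ * ENNReal.ofReal (R ^ d) * vol (ball 0 1)) := by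
        rw [Measure.addHaar_closedBall vol x hr, Measure.addHaar_closedBall vol c hR.le, mul_assoc]
    _ = ENNReal.ofReal (r ^ d / (σ * R ^ d)) := by
        rw [ENNReal.mul_div_mul_right _ _ hV0 hVtop, ← ENNReal.ofReal_mul hσ.le,
          ENNReal.ofReal_div_of_pos (by positivity)]
    _ = ENNReal.ofReal ((r / R) ^ d / σ) := by
        rw [div_pow, div_div, mul_comm σ]

theorem measure_exists_exists_le_card_mul {α ι κ : Type*} [MeasurableSpace α]
    [Fintype ι] [Fintype κ] (μ : Measure α) (s : ι → κ → Set α) {ε : ENNReal}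
    (h : ∀ i j, μ (s i j) ≤ ε) :
    μ {x | ∃ i j, x ∈ s i j} ≤ Fintype.card ι * Fintype.card κ * ε := by
  have hset : {x | ∃ i j, x ∈ s i j} = ⋃ p : ι × κ, s p.1 p.2 := by
    ext x; simp
  calc μ {x | ∃ i j, x ∈ s i j}
      ≤ ∑ p : ι × κ, μ (s p.1 p.2) := hset ▸ measure_iUnion_fintype_le μ _
    _ ≤ ∑ _p : ι × κ, ε := Finset.sum_le_sum fun p _ => h p.1 p.2
    _ = Fintype.card ι * Fintype.card κ * ε := by
        simp [Finset.sum_const, Fintype.card_prod, nsmul_eq_mul]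

theorem smooth_tuple_near_points_prob_le_general
    {E : Type*} [NormedAddCommGroup E] [NormedSpace ℝ E]
    [MeasurableSpace E] [BorelSpace E] [FiniteDimensional ℝ E]
    {m : ℕ} (hm : 1 ≤ m) (hdim : Module.finrank ℝ E = m)
    (vol : Measure E) [vol.IsAddHaarMeasure]
    (c : E) {R : ℝ} (hR : 0 < R) {σ : ℝ} (hσ0 : 0 < σ)
    {k : ℕ} (hk : 1 ≤ k) {δ : ℝ} (hδ : 0 < δ)
    (y : Fin k → E)
    (μ : Measure (Fin k → E))
    (hmarg : ∀ j : Fin k, IsSmoothWrt vol (μ.map fun x => x j) σ c R) :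
    μ {x | ∃ i j : Fin k, dist (x j) (y i) ≤ δ} ≤
        ENNReal.ofReal (((k : ℝ) ^ 2 / σ) * (δ / R) ^ m) ∧
      (δ = R * (σ / (2 * (k : ℝ) ^ 2)) ^ ((1 : ℝ) / m) →
        μ {x | ∃ i j : Fin k, dist (x j) (y i) ≤ δ} ≤ 1 / 2) := by
  have hball : ∀ i j : Fin k,
      μ {x | dist (x j) (y i) ≤ δ} ≤ ENNReal.ofReal ((δ / R) ^ m / σ) := fun i j => by
    rw [← hdim]
    convert (hmarg j).measure_closedBall_le hσ0 hR (y i) hδ.le using 1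
    rw [Measure.map_apply (measurable_pi_apply j) measurableSet_closedBall]
    rfl
  have hbound : μ {x | ∃ i j : Fin k, dist (x j) (y i) ≤ δ} ≤
      ENNReal.ofReal (((k : ℝ) ^ 2 / σ) * (δ / R) ^ m) := by
    refine (measure_exists_exists_le_card_mul μ _ hball).trans_eq ?_
    rw [mul_comm_div, ENNReal.ofReal_mul (by positivity), ← Nat.cast_pow,
      ENNReal.ofReal_natCast, Fintype.card_fin, sq, Nat.cast_mul]
  refine ⟨hbound, fun hδeq => hbound.trans_eq ?_⟩
  have hpow : (δ / R) ^ m = σ / (2 * (k : ℝ) ^ 2) := by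
    rw [hδeq, mul_div_cancel_left₀ _ hR.ne', one_div,
      Real.rpow_inv_natCast_pow (by positivity) (by omega)]
  have hk0 : (k : ℝ) ≠ 0 := by positivity
  rw [hpow, show (k : ℝ) ^ 2 / σ * (σ / (2 * k ^ 2)) = 2⁻¹ by field_simp, one_div,
    ENNReal.ofReal_inv_of_pos two_pos, ENNReal.ofReal_ofNat]

/-- per-step union bound in the proof of Lemma 3.3.
Let `E` be a real normed vector space of finite dimension `m ≥ 1`, `B = closedBall c R`
with `R > 0`, `σ ∈ (0,1]`, `k ≥ 1`, `δ > 0`. Let `y 1, …, y k ∈ E` be fixed points and `μ`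
a probability measure on `E^k` whose coordinate marginals are all `σ`-smooth with respect
to `B`. Then `μ {x | ∃ i j, ‖x j - y i‖ ≤ δ} ≤ (k²/σ)·(δ/R)^m`; in particular, for
`δ = R·(σ/(2k²))^{1/m}` this probability is at most `1/2`. -/
theorem smooth_tuple_near_points_prob_le
    {E : Type*} [NormedAddCommGroup E] [NormedSpace ℝ E]
    [MeasurableSpace E] [BorelSpace E] [FiniteDimensional ℝ E]
    {m : ℕ} (hm : 1 ≤ m) (hdim : Module.finrank ℝ E = m)
    (vol : Measure E) [vol.IsAddHaarMeasure]
    (c : E) {R : ℝ} (hR : 0 < R) {σ : ℝ} (hσ0 : 0 < σ) (hσ1 : σ ≤ 1)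
    {k : ℕ} (hk : 1 ≤ k) {δ : ℝ} (hδ : 0 < δ)
    (y : Fin k → E)
    (μ : Measure (Fin k → E)) [IsProbabilityMeasure μ]
    (hmarg : ∀ j : Fin k, IsSmoothWrt vol (μ.map fun x => x j) σ c R) :
    μ {x | ∃ i j : Fin k, dist (x j) (y i) ≤ δ} ≤
        ENNReal.ofReal (((k : ℝ) ^ 2 / σ) * (δ / R) ^ m) ∧
      (δ = R * (σ / (2 * (k : ℝ) ^ 2)) ^ ((1 : ℝ) / m) →
        μ {x | ∃ i j : Fin k, dist (x j) (y i) ≤ δ} ≤ 1 / 2) :=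
  smooth_tuple_near_points_prob_le_general hm hdim vol c hR hσ0 hk hδ y μ hmarg
end

section
/- Let m ≥ 1 and k ≥ 1, let ℝ^m carry the ℓ∞ norm, let V ⊆ {0,1}^m be a set of k+1 distinct vertices of the unit cube, let 0 < ε ≤ 1/4, and let P_ε = ⋃_{v∈V} { x ∈ [0,1]^m : ‖x − v‖_∞ ≤ ε }. Then for every k points c_1,…,c_k ∈ ℝ^m, if r is drawn uniformly at random from P_ε (with respect to Lebesgue measure), then E[ min_{1≤i≤k} ‖c_i − r‖_∞ ] ≥ (1 − 2ε)/(2(k+1)). -/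
open MeasureTheory

lemma box_eq' {m : ℕ} (v : Fin m → ℝ) {ε : ℝ} (hε0 : 0 ≤ ε) :
    Set.Icc (0 : Fin m → ℝ) 1 ∩ Metric.closedBall v ε
      = Set.pi Set.univ (fun i => Set.Icc (max 0 (v i - ε)) (min 1 (v i + ε))) := by
  ext x
  simp only [Set.mem_inter_iff, Set.mem_Icc, Pi.le_def, Metric.mem_closedBall,
    dist_pi_le_iff hε0, Real.dist_eq, Set.mem_pi, Set.mem_univ, forall_true_left,
    max_le_iff, le_min_iff, abs_sub_le_iff, Pi.zero_apply, Pi.one_apply, true_implies]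
  constructor
  · rintro ⟨⟨h0, h1⟩, hb⟩ i
    exact ⟨⟨h0 i, by linarith [(hb i).2]⟩, ⟨h1 i, by linarith [(hb i).1]⟩⟩
  · intro h
    exact ⟨⟨fun i => (h i).1.1, fun i => (h i).2.1⟩,
      fun i => ⟨by linarith [(h i).2.2], by linarith [(h i).1.2]⟩⟩

lemma vol_box' {m : ℕ} (v : Fin m → ℝ) {ε : ℝ} (hε0 : 0 ≤ ε) (hε1 : ε ≤ 1)
    (hv : ∀ i, v i = 0 ∨ v i = 1) :
    volume (Set.pi Set.univ (fun i => Set.Icc (max 0 (v i - ε)) (min 1 (v i + ε))))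
      = ENNReal.ofReal ε ^ m := by
  rw [volume_pi_pi]
  have h : ∀ i, volume (Set.Icc (max 0 (v i - ε)) (min 1 (v i + ε))) = ENNReal.ofReal ε := by
    intro i
    rw [Real.volume_Icc]
    congr 1
    rcases hv i with h | h <;> rw [h]
    · rw [max_eq_left (by linarith), min_eq_right (by linarith)]; ring
    · rw [max_eq_right (by linarith), min_eq_left (by linarith)]; ring
  simp [h]

lemma vertex_dist' {m : ℕ} {v w : Fin m → ℝ} (hv : ∀ i, v i = 0 ∨ v i = 1)
    (hw : ∀ i, w i = 0 ∨ w i = 1) (hne : v ≠ w) : 1 ≤ dist v w := by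
  obtain ⟨i, hi⟩ : ∃ i, v i ≠ w i := by
    by_contra h; push_neg at h; exact hne (funext h)
  calc (1:ℝ) ≤ dist (v i) (w i) := by
        rcases hv i with h1 | h1 <;> rcases hw i with h2 | h2 <;>
          simp [h1, h2, Real.dist_eq] at hi ⊢
    _ ≤ dist v w := dist_le_pi_dist v w i


/-- per-request online cost lower bound in the proof of Theorem 1.4 for
`k`-server. Let `m ≥ 1` and `k ≥ 1`, let `ℝ^m = (Fin m → ℝ)` carry the `ℓ∞` norm (the sup
norm, which is the default norm on the pi type), let `V` be a set of `k+1` distinct vertices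
of the unit cube `{0,1}^m`, let `0 < ε ≤ 1/4`, and let
`P = ⋃_{v ∈ V} {x ∈ [0,1]^m : ‖x - v‖_∞ ≤ ε}`. Then for every `k` points
`c 1, …, c k ∈ ℝ^m`, if `r` is drawn uniformly at random from `P` (Lebesgue measure
restricted to `P` and normalized), then
`E[min_{1 ≤ i ≤ k} ‖c i - r‖_∞] ≥ (1 - 2ε)/(2(k+1))`. -/
theorem expected_min_dist_lower_bound
    {m k : ℕ} (hm : 1 ≤ m) (hk : 1 ≤ k)
    (V : Finset (Fin m → ℝ)) (hVcard : V.card = k + 1)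
    (hV : ∀ v ∈ V, ∀ i, v i = 0 ∨ v i = 1)
    {ε : ℝ} (hε0 : 0 < ε) (hε : ε ≤ 1 / 4)
    (P : Set (Fin m → ℝ))
    (hP : P = {x | x ∈ Set.Icc (0 : Fin m → ℝ) 1 ∧ ∃ v ∈ V, dist x v ≤ ε})
    (c : Fin k → (Fin m → ℝ)) :
    (1 - 2 * ε) / (2 * ((k : ℝ) + 1)) ≤
      ∫ x, (⨅ i : Fin k, dist (c i) x) ∂((volume P)⁻¹ • volume.restrict P) := by
  classical
  have hknem : Nonempty (Fin k) := ⟨⟨0, hk⟩⟩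
  set δ : ℝ := (1 - 2 * ε) / 2 with hδdef
  have hδ0 : 0 ≤ δ := by rw [hδdef]; linarith
  set Q : (Fin m → ℝ) → Set (Fin m → ℝ) :=
    fun v => Set.Icc (0 : Fin m → ℝ) 1 ∩ Metric.closedBall v ε with hQdef
  have hPQ : P = ⋃ v ∈ V, Q v := by
    rw [hP]; ext x
    simp only [Set.mem_setOf_eq, Set.mem_iUnion, hQdef, Set.mem_inter_iff,
      Metric.mem_closedBall, exists_prop]
    tauto
  have hQvol : ∀ v ∈ V, volume (Q v) = ENNReal.ofReal ε ^ m := by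
    intro v hv
    show volume (Set.Icc (0 : Fin m → ℝ) 1 ∩ Metric.closedBall v ε) = _
    rw [box_eq' v hε0.le, vol_box' v hε0.le (by linarith) (hV v hv)]
  have hQmeas : ∀ v, MeasurableSet (Q v) :=
    fun v => measurableSet_Icc.inter Metric.isClosed_closedBall.measurableSet
  set e : ENNReal := ENNReal.ofReal ε ^ m with hedef
  have he0 : e ≠ 0 := by
    simp [hedef, pow_eq_zero_iff, ENNReal.ofReal_eq_zero, not_le, hε0]
  have heT : e ≠ ⊤ := by
    simp [hedef, ENNReal.pow_ne_top, ENNReal.ofReal_ne_top]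
  -- volume P upper bound
  have hPle : volume P ≤ ((k : ENNReal) + 1) * e := by
    rw [hPQ]
    calc volume (⋃ v ∈ V, Q v) ≤ ∑ v ∈ V, volume (Q v) := measure_biUnion_finset_le V Q
      _ = ((k : ENNReal) + 1) * e := by
          rw [Finset.sum_congr rfl hQvol, Finset.sum_const, hVcard]
          simp [mul_comm]
  -- existence of good vertex
  have key : ∃ v ∈ V, ∀ (i : Fin k), ∀ x ∈ Q v, δ ≤ dist (c i) x := by
    set W : Finset (Fin m → ℝ) :=
      Finset.univ.biUnion (fun i : Fin k =>
        V.filter (fun v => ∃ x ∈ Q v, dist (c i) x < δ)) with hWdef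
    have hWcard : W.card ≤ k := by
      refine le_trans (Finset.card_biUnion_le) ?_
      have h1 : ∀ i : Fin k,
          (V.filter (fun v => ∃ x ∈ Q v, dist (c i) x < δ)).card ≤ 1 := by
        intro i
        refine Finset.card_le_one.2 fun v hv w hw => ?_
        simp only [Finset.mem_filter] at hv hw
        obtain ⟨hvV, x, hx, hxd⟩ := hv
        obtain ⟨hwV, y, hy, hyd⟩ := hw
        by_contra hne
        have h1 : (1:ℝ) ≤ dist v w := vertex_dist' (hV v hvV) (hV w hwV) hne
        have hxv : dist x v ≤ ε := Metric.mem_closedBall.mp hx.2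
        have hyw : dist y w ≤ ε := Metric.mem_closedBall.mp hy.2
        have h2 : dist v w ≤ dist v x + dist x (c i) + dist (c i) y + dist y w :=
          calc dist v w ≤ dist v y + dist y w := dist_triangle v y w
            _ ≤ (dist v x + dist x y) + dist y w := by
                linarith [dist_triangle v x y]
            _ ≤ (dist v x + (dist x (c i) + dist (c i) y)) + dist y w := by
                linarith [dist_triangle x (c i) y]
            _ = dist v x + dist x (c i) + dist (c i) y + dist y w := by ring
        rw [dist_comm v x, dist_comm x (c i)] at h2
        have : δ + δ = 1 - 2 * ε := by rw [hδdef]; ring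
        linarith
      calc ∑ i : Fin k, (V.filter (fun v => ∃ x ∈ Q v, dist (c i) x < δ)).card
          ≤ ∑ _i : Fin k, 1 := Finset.sum_le_sum fun i _ => h1 i
        _ = k := by simp
    have hne : (V \ W).Nonempty := by
      rw [← Finset.card_pos]
      have := Finset.le_card_sdiff W V
      omega
    obtain ⟨v, hv⟩ := hne
    rw [Finset.mem_sdiff] at hv
    refine ⟨v, hv.1, fun i x hx => ?_⟩
    by_contra hlt
    push_neg at hlt
    exact hv.2 (Finset.mem_biUnion.2 ⟨i, Finset.mem_univ i,
      Finset.mem_filter.2 ⟨hv.1, x, hx, hlt⟩⟩)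
  obtain ⟨v, hvV, hvfar⟩ := key
  have hQsub : Q v ⊆ P := by rw [hPQ]; exact Set.subset_biUnion_of_mem hvV
  have hQv : volume (Q v) = e := hQvol v hvV
  have hA0 : volume P ≠ 0 := by
    intro h
    exact he0 (le_antisymm (hQv ▸ h ▸ measure_mono hQsub) zero_le)
  have hAT : volume P ≠ ⊤ := by
    intro h
    rw [h] at hPle
    exact (lt_of_le_of_lt hPle (by
      exact ENNReal.mul_lt_top (by simp) heT.lt_top)).ne rfl
  set ν := (volume P)⁻¹ • volume.restrict P with hνdef
  have hνQ : ((k : ENNReal) + 1)⁻¹ ≤ ν (Q v) := by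
    rw [hνdef]
    simp only [Measure.smul_apply, smul_eq_mul, Measure.restrict_apply (hQmeas v),
      Set.inter_eq_left.mpr hQsub, hQv]
    calc ((k : ENNReal) + 1)⁻¹ = (((k : ENNReal) + 1) * e)⁻¹ * e := by
          rw [ENNReal.mul_inv (Or.inr heT) (Or.inr he0), mul_assoc,
            ENNReal.inv_mul_cancel he0 heT, mul_one]
      _ ≤ (volume P)⁻¹ * e := mul_le_mul_left (ENNReal.inv_le_inv' hPle) e
  have hνQT : ν (Q v) ≠ ⊤ := by
    rw [hνdef]
    simp only [Measure.smul_apply, smul_eq_mul, Measure.restrict_apply (hQmeas v),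
      Set.inter_eq_left.mpr hQsub, hQv]
    exact ENNReal.mul_ne_top (ENNReal.inv_ne_top.2 hA0) heT
  -- integrability
  have hPcomp : IsCompact P := by
    have hclosed : IsClosed P := by
      rw [hPQ]
      exact Set.Finite.isClosed_biUnion V.finite_toSet
        (fun v _ => isClosed_Icc.inter Metric.isClosed_closedBall)
    refine IsCompact.of_isClosed_subset (isCompact_Icc (a := (0 : Fin m → ℝ)) (b := 1)) hclosed ?_
    rw [hPQ]
    exact Set.iUnion₂_subset fun v _ => Set.inter_subset_left
  have hfc : Continuous fun x => ⨅ i : Fin k, dist (c i) x := by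
    have : (fun x => ⨅ i : Fin k, dist (c i) x)
        = fun x => Finset.univ.inf' Finset.univ_nonempty (fun i => dist (c i) x) := by
      funext x
      rw [Finset.inf'_univ_eq_ciInf]
    rw [this]
    exact Continuous.finset_inf'_apply Finset.univ_nonempty
      (fun i _ => (continuous_const.dist continuous_id))
  have hint : Integrable (fun x => ⨅ i : Fin k, dist (c i) x) ν := by
    rw [hνdef]
    refine Integrable.smul_measure ?_ (ENNReal.inv_ne_top.2 hA0)
    exact hfc.continuousOn.integrableOn_compact hPcomp
  have hf0 : ∀ x, 0 ≤ ⨅ i : Fin k, dist (c i) x :=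
    fun x => le_ciInf fun i => dist_nonneg
  have hfin : IsFiniteMeasure ν := by
    constructor
    rw [hνdef]
    simp only [Measure.smul_apply, smul_eq_mul, Measure.restrict_apply_univ]
    rw [ENNReal.inv_mul_cancel hA0 hAT]
    exact ENNReal.one_lt_top
  have hind : Integrable ((Q v).indicator (fun _ => δ)) ν :=
    (integrable_const δ).indicator (hQmeas v)
  have hmono : ∀ x, (Q v).indicator (fun _ => δ) x ≤ ⨅ i : Fin k, dist (c i) x := by
    intro x
    by_cases hx : x ∈ Q v
    · rw [Set.indicator_of_mem hx]
      exact le_ciInf fun i => hvfar i x hx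
    · rw [Set.indicator_of_notMem hx]
      exact hf0 x
  have htr : (1 : ℝ) / ((k : ℝ) + 1) ≤ (ν (Q v)).toReal := by
    have h := ENNReal.toReal_mono hνQT hνQ
    rw [ENNReal.toReal_inv] at h
    have h2 : ((k : ENNReal) + 1).toReal = (k : ℝ) + 1 := by
      rw [ENNReal.toReal_add (ENNReal.natCast_ne_top k) ENNReal.one_ne_top,
        ENNReal.toReal_natCast, ENNReal.toReal_one]
    rw [h2] at h
    rwa [one_div]
  calc (1 - 2 * ε) / (2 * ((k : ℝ) + 1)) = δ * (1 / ((k : ℝ) + 1)) := by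
        rw [hδdef]; field_simp
    _ ≤ δ * (ν (Q v)).toReal := by
        exact mul_le_mul_of_nonneg_left htr hδ0
    _ = ∫ x, (Q v).indicator (fun _ => δ) x ∂ν := by
        rw [integral_indicator_const δ (hQmeas v)]
        simp [mul_comm, Measure.real]
    _ ≤ ∫ x, (⨅ i : Fin k, dist (c i) x) ∂ν := integral_mono hind hint hmono
end
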